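/- Let q be a prime power and let H be a subgroup of PGL₂(F_q), acting naturally on the projective line P¹(F_q) by Möbius transformations. Then the total number of orbits of H on P¹(F_q) equals ⌈(q+1)/|H|⌉ if the number of short orbits (orbits of cardinality < |H|) is 0 or 1, and equals ⌈(q+1)/|H|⌉ + 1 if the number of short orbits is 2 or 3. -/

import Mathlib

/-!
Let `n = |H|`. Orbit sizes divide `n`, so a short orbit has at most `n / 2` points. If there
are `s` short orbits of total size `T` and `c` long ones, then `q + 1 = T + c n`, the number of
orbits is `s + c`, and `⌈(q + 1) / n⌉ = c + ⌈T / n⌉`; since `s ≤ T ≤ s n / 2`, this gives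
`⌈T / n⌉ = s` for `s ≤ 1` and `⌈T / n⌉ = 1` for `s = 2`. For `s = 3` one needs `T > n`: a
non-identity Möbius transformation fixes at most two points (the roots of
`c x² + (d - a) x - b`, together with `∞` when `c = 0`), so Burnside's lemma gives
`(s + c) n ≤ q + 1 + 2 (n - 1)`, that is `T ≥ n + 2`.
-/

/-- The Möbius transformation `x ↦ (ax+b)/(cx+d)` on the projective line
`P¹(F) = F ∪ {∞}`, with `none` playing the role of `∞`. -/
def mobiusMap {F : Type*} [Field F] [DecidableEq F] (a b c d : F) :
    Option F → Option F
  | none => if c = 0 then none else some (a / c)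
  | some x => if c * x + d = 0 then none else some ((a * x + b) / (c * x + d))

/-- A permutation of `P¹(F)` is Möbius if it is given by some `(ax+b)/(cx+d)`
with `ad - bc ≠ 0`; such permutations are exactly the elements of `PGL₂(F_q)`
in its natural action on the projective line. -/
def IsMobius {F : Type*} [Field F] [DecidableEq F] (σ : Equiv.Perm (Option F)) : Prop :=
  ∃ a b c d : F, a * d - b * c ≠ 0 ∧ ∀ x, σ x = mobiusMap a b c d x

section Mobius

variable {F : Type*} [Field F] [DecidableEq F] {a b c d : F}

open Polynomial

theorem mobiusMap_none_eq_none (h : mobiusMap a b c d none = none) : c = 0 := by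
  by_contra hc
  simp [mobiusMap, hc] at h

theorem mobiusMap_some_eq_some {y : F} (h : mobiusMap a b c d (some y) = some y) :
    c * y ^ 2 + (d - a) * y - b = 0 := by
  by_cases hy : c * y + d = 0
  · simp [mobiusMap, hy] at h
  · simp only [mobiusMap, hy, if_false, Option.some.injEq] at h
    rw [div_eq_iff hy] at h
    linear_combination -h

theorem mobiusMap_scalar_apply (ha : a ≠ 0) (x : Option F) : mobiusMap a 0 0 a x = x := by
  cases x <;> simp [mobiusMap, ha]

theorem IsMobius.ncard_fixedPoints_le_two {σ : Equiv.Perm (Option F)} (hσ : IsMobius σ)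
    (h1 : σ ≠ 1) : {x | σ x = x}.ncard ≤ 2 := by
  obtain ⟨a, b, c, d, hdet, hσ⟩ := hσ
  set p : F[X] := C c * X ^ 2 + C (d - a) * X + C (-b) with hp_def
  have hp : p ≠ 0 := by
    intro hp
    have hc : c = 0 := by simpa [p] using congrArg (coeff · 2) hp
    have hda : d - a = 0 := by simpa [p] using congrArg (coeff · 1) hp
    have hb : b = 0 := by simpa [p] using congrArg (coeff · 0) hp
    obtain rfl := sub_eq_zero.mp hda
    subst hc hb
    have hd : d ≠ 0 := by simpa using hdet
    exact h1 (Equiv.ext fun x => (hσ x).trans (mobiusMap_scalar_apply hd x))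
  have hroots : ∀ y : F, σ (some y) = some y → y ∈ p.rootSet F := fun y hy => by
    rw [mem_rootSet]
    refine ⟨hp, ?_⟩
    simpa [p, ← sub_eq_add_neg] using mobiusMap_some_eq_some ((hσ _).symm.trans hy)
  have hsome : (some '' p.rootSet F).ncard ≤ p.natDegree := by
    rw [Set.ncard_image_of_injective _ (Option.some_injective F)]
    exact ncard_rootSet_le p F
  by_cases hc : c = 0
  · have hdeg : p.natDegree ≤ 1 := by
      rw [hp_def, hc, C_0, zero_mul, zero_add]
      exact natDegree_linear_le
    have hsub : {x | σ x = x} ⊆ insert none (some '' p.rootSet F) := by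
      rintro (_ | y) hy
      · exact Set.mem_insert _ _
      · exact Set.mem_insert_of_mem _ ⟨y, hroots y hy, rfl⟩
    calc {x | σ x = x}.ncard ≤ (insert none (some '' p.rootSet F)).ncard :=
          Set.ncard_le_ncard hsub (Set.toFinite _)
      _ ≤ (some '' p.rootSet F).ncard + 1 := Set.ncard_insert_le _ _
      _ ≤ 2 := by omega
  · have hsub : {x | σ x = x} ⊆ some '' p.rootSet F := by
      rintro (_ | y) hy
      · exact absurd (mobiusMap_none_eq_none ((hσ _).symm.trans hy)) hc
      · exact ⟨y, hroots y hy, rfl⟩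
    calc {x | σ x = x}.ncard ≤ (some '' p.rootSet F).ncard :=
          Set.ncard_le_ncard hsub (Set.toFinite _)
      _ ≤ p.natDegree := hsome
      _ ≤ 2 := natDegree_quadratic_le

end Mobius

namespace MulAction

variable {G α : Type*} [Group G] [MulAction G α]

theorem setOf_exists_eq_orbit :
    {O : Set α | ∃ x, O = orbit G x} =
      Set.range (orbitRel.Quotient.orbit (G := G) (α := α)) := by
  ext O
  constructor
  · rintro ⟨x, rfl⟩
    exact ⟨Quotient.mk'' x, orbitRel.Quotient.orbit_mk x⟩
  · rintro ⟨ω, rfl⟩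
    exact ⟨ω.out, orbitRel.Quotient.orbit_eq_orbit_out ω Quotient.out_eq'⟩

theorem ncard_setOf_exists_eq_orbit :
    {O : Set α | ∃ x, O = orbit G x}.ncard = Nat.card (orbitRel.Quotient G α) := by
  rw [setOf_exists_eq_orbit, ← Nat.card_coe_set_eq,
    Nat.card_range_of_injective orbitRel.Quotient.orbit_injective]

theorem ncard_setOf_exists_eq_orbit_and (P : Set α → Prop) :
    {O : Set α | (∃ x, O = orbit G x) ∧ P O}.ncard =
      {ω : orbitRel.Quotient G α | P ω.orbit}.ncard := by
  have h : {O : Set α | (∃ x, O = orbit G x) ∧ P O} =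
      orbitRel.Quotient.orbit '' (orbitRel.Quotient.orbit (G := G) ⁻¹' {O | P O}) := by
    rw [Set.image_preimage_eq_range_inter, ← setOf_exists_eq_orbit]
    rfl
  rw [h, Set.ncard_image_of_injective _ orbitRel.Quotient.orbit_injective]
  rfl

theorem ncard_orbit_dvd_card (ω : orbitRel.Quotient G α) : ω.orbit.ncard ∣ Nat.card G := by
  rw [orbitRel.Quotient.orbit_eq_orbit_out ω Quotient.out_eq', ← index_stabilizer]
  exact Subgroup.index_dvd_card _

theorem ncard_orbit_le_card [Finite G] (ω : orbitRel.Quotient G α) :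
    ω.orbit.ncard ≤ Nat.card G :=
  Nat.le_of_dvd Nat.card_pos (ncard_orbit_dvd_card ω)

theorem two_mul_ncard_orbit_le_of_lt [Finite G] {ω : orbitRel.Quotient G α}
    (hω : ω.orbit.ncard < Nat.card G) : 2 * ω.orbit.ncard ≤ Nat.card G := by
  obtain ⟨k, hk⟩ := ncard_orbit_dvd_card ω
  have hG : 0 < Nat.card G := Nat.card_pos
  have hk2 : 2 ≤ k := by
    rcases k with _ | _ | k <;> omega
  rw [hk, mul_comm 2]
  exact Nat.mul_le_mul_left _ hk2

variable [Finite α]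

variable (G α) in
noncomputable def shortOrbits : Finset (orbitRel.Quotient G α) :=
  (Set.toFinite {ω | ω.orbit.ncard < Nat.card G}).toFinset

variable (G α) in
noncomputable def longOrbits : Finset (orbitRel.Quotient G α) :=
  (Set.toFinite {ω | ω.orbit.ncard = Nat.card G}).toFinset

theorem mem_shortOrbits {ω : orbitRel.Quotient G α} :
    ω ∈ shortOrbits G α ↔ ω.orbit.ncard < Nat.card G :=
  Set.Finite.mem_toFinset _

theorem mem_longOrbits {ω : orbitRel.Quotient G α} :
    ω ∈ longOrbits G α ↔ ω.orbit.ncard = Nat.card G :=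
  Set.Finite.mem_toFinset _

theorem ncard_setOf_short_orbit :
    {O : Set α | (∃ x, O = orbit G x) ∧ O.ncard < Nat.card G}.ncard =
      (shortOrbits G α).card := by
  rw [ncard_setOf_exists_eq_orbit_and fun O => O.ncard < Nat.card G,
    Set.ncard_eq_toFinset_card _ (Set.toFinite _)]
  rfl

theorem card_shortOrbits_le_sum :
    (shortOrbits G α).card ≤ ∑ ω ∈ shortOrbits G α, ω.orbit.ncard := by
  simpa using Finset.card_nsmul_le_sum (shortOrbits G α) (fun ω => ω.orbit.ncard) 1
    fun ω _ => (Set.ncard_pos (Set.toFinite _)).2 ω.nonempty_orbit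

variable [Finite G]

theorem sum_shortOrbits_add_sum_longOrbits [Fintype (orbitRel.Quotient G α)] {M : Type*}
    [AddCommMonoid M] (f : orbitRel.Quotient G α → M) :
    ∑ ω ∈ shortOrbits G α, f ω + ∑ ω ∈ longOrbits G α, f ω = ∑ ω, f ω := by
  classical
  rw [← Finset.sum_union]
  · congr 1
    refine Finset.eq_univ_of_forall fun ω => ?_
    rw [Finset.mem_union, mem_shortOrbits, mem_longOrbits]
    exact (ncard_orbit_le_card ω).lt_or_eq
  · exact Finset.disjoint_left.2 fun ω hs hl => (mem_shortOrbits.1 hs).ne (mem_longOrbits.1 hl)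

theorem card_shortOrbits_add_card_longOrbits :
    (shortOrbits G α).card + (longOrbits G α).card = Nat.card (orbitRel.Quotient G α) := by
  have := Fintype.ofFinite (orbitRel.Quotient G α)
  rw [Nat.card_eq_fintype_card, ← Finset.card_univ]
  simpa using sum_shortOrbits_add_sum_longOrbits (G := G) (α := α) fun _ => (1 : ℕ)

theorem card_eq_sum_shortOrbits_add_card_longOrbits_mul :
    Nat.card α = ∑ ω ∈ shortOrbits G α, ω.orbit.ncard + (longOrbits G α).card * Nat.card G := by
  have := Fintype.ofFinite (orbitRel.Quotient G α)
  rw [Nat.card_congr (selfEquivSigmaOrbits' G α), Nat.card_sigma]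
  simp only [Nat.card_coe_set_eq]
  rw [← sum_shortOrbits_add_sum_longOrbits,
    Finset.sum_congr rfl fun ω hω => mem_longOrbits.1 hω, Finset.sum_const, smul_eq_mul]

theorem two_mul_sum_shortOrbits_le :
    2 * ∑ ω ∈ shortOrbits G α, ω.orbit.ncard ≤ (shortOrbits G α).card * Nat.card G := by
  rw [Finset.mul_sum, ← smul_eq_mul]
  exact Finset.sum_le_card_nsmul _ _ _ fun ω hω =>
    two_mul_ncard_orbit_le_of_lt (mem_shortOrbits.1 hω)

theorem card_orbits_mul_card_le {k : ℕ} (hfix : ∀ g : G, g ≠ 1 → (fixedBy α g).ncard ≤ k) :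
    Nat.card (orbitRel.Quotient G α) * Nat.card G ≤ Nat.card α + k * (Nat.card G - 1) := by
  classical
  have := Fintype.ofFinite G
  have := Fintype.ofFinite α
  have := Fintype.ofFinite (orbitRel.Quotient G α)
  have hburnside := sum_card_fixedBy_eq_card_orbits_mul_card_group G α
  simp only [← Nat.card_eq_fintype_card, Nat.card_coe_set_eq] at hburnside
  rw [← hburnside, ← Finset.add_sum_erase _ _ (Finset.mem_univ 1), fixedBy_one_eq_univ,
    Set.ncard_univ]
  have hrest := Finset.sum_le_card_nsmul (Finset.univ.erase (1 : G))
    (fun g => (fixedBy α g).ncard) k fun g hg => hfix g (Finset.ne_of_mem_erase hg)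
  rw [Finset.card_erase_of_mem (Finset.mem_univ _), Finset.card_univ,
    ← Nat.card_eq_fintype_card, smul_eq_mul] at hrest
  linarith [mul_comm k (Nat.card G - 1)]

end MulAction

theorem eq_ceilDiv_of_short_orbit_bounds {n q N s c T : ℕ} (hn : 0 < n) (hN : N = s + c)
    (hq : q = T + c * n) (hsT : s ≤ T) (hTs : 2 * T ≤ s * n) (hNn : N * n ≤ q + 2 * (n - 1)) :
    ((s = 0 ∨ s = 1) → N = (q + n - 1) / n) ∧ ((s = 2 ∨ s = 3) → N = (q + n - 1) / n + 1) := by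
  subst hN hq
  have hceil : (T + c * n + n - 1) / n = (T + n - 1) / n + c := by
    rw [show T + c * n + n - 1 = T + n - 1 + c * n by omega, Nat.add_mul_div_right _ _ hn]
  rw [hceil]
  rw [add_mul] at hNn
  refine ⟨fun hs => ?_, fun hs => ?_⟩ <;> rcases hs with rfl | rfl
  · rw [Nat.div_eq_of_lt (by omega)]
  · rw [Nat.div_eq_of_lt_le (k := 1) (by omega) (by omega)]
  · rw [Nat.div_eq_of_lt_le (k := 1) (by omega) (by omega)]; omega
  · rw [Nat.div_eq_of_lt_le (k := 2) (by omega) (by omega)]; omega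

/-- For a subgroup `H` of `PGL₂(F_q)` acting naturally on `P¹(F_q)`, the total number
of orbits is `⌈(q+1)/|H|⌉` if there are `0` or `1` short orbits, and `⌈(q+1)/|H|⌉ + 1`
if there are `2` or `3` short orbits.  (Here `⌈(q+1)/|H|⌉` is written as the ceiling
division `(q + 1 + |H| - 1) / |H|` of natural numbers.) -/
theorem stmt8 {F : Type*} [Field F] [Fintype F] [DecidableEq F]
    (H : Subgroup (Equiv.Perm (Option F))) (hH : ∀ σ ∈ H, IsMobius σ) :
    (({O : Set (Option F) | (∃ x, O = MulAction.orbit H x) ∧ O.ncard < Nat.card H}.ncard = 0 ∨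
      {O : Set (Option F) | (∃ x, O = MulAction.orbit H x) ∧ O.ncard < Nat.card H}.ncard = 1) →
      {O : Set (Option F) | ∃ x, O = MulAction.orbit H x}.ncard
        = (Fintype.card F + 1 + Nat.card H - 1) / Nat.card H) ∧
    (({O : Set (Option F) | (∃ x, O = MulAction.orbit H x) ∧ O.ncard < Nat.card H}.ncard = 2 ∨
      {O : Set (Option F) | (∃ x, O = MulAction.orbit H x) ∧ O.ncard < Nat.card H}.ncard = 3) →
      {O : Set (Option F) | ∃ x, O = MulAction.orbit H x}.ncard
        = (Fintype.card F + 1 + Nat.card H - 1) / Nat.card H + 1) := by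
  have hcard : Nat.card (Option F) = Fintype.card F + 1 := by
    rw [Nat.card_eq_fintype_card, Fintype.card_option]
  have hfix (g : H) (hg : g ≠ 1) : (MulAction.fixedBy (Option F) g).ncard ≤ 2 :=
    (hH g g.2).ncard_fixedPoints_le_two (by simpa using hg)
  have hburnside := MulAction.card_orbits_mul_card_le hfix
  rw [MulAction.ncard_setOf_short_orbit, MulAction.ncard_setOf_exists_eq_orbit]
  rw [hcard] at hburnside
  exact eq_ceilDiv_of_short_orbit_bounds Nat.card_pos
    MulAction.card_shortOrbits_add_card_longOrbits.symm
    (hcard ▸ MulAction.card_eq_sum_shortOrbits_add_card_longOrbits_mul)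
    MulAction.card_shortOrbits_le_sum MulAction.two_mul_sum_shortOrbits_le hburnside
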